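/- arXiv:1801.10392 — 3 statements merged into one kernel-verified Lean document; each statement's English description precedes it below -/
import Mathlib

section
/- For every integer N ≥ 1, every integer m ≥ 0, and every complex polynomial P of degree at most N satisfying ∫₀¹ |P(e^{2πiy})|² dy = 1, there exists a polynomial Q(z) = Σ_k β_k z^k of degree at most 2m + 7N such that: (i) all coefficients β_k are nonnegative reals with Σ_k β_k = 1; (ii) β_k = 1/(m + 4N + 1) for every index k with m + 3N ≤ k ≤ m + 4N; and (iii) |Q(z)| ≤ 6^N · 2^{−m/2} · |P(z)| for every z ∈ 𝕋₋. -/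
open Polynomial Real

noncomputable section


lemma exists_proj' (ζ : ℂ) : ∃ w : ℂ, ‖w‖ = 1 ∧ w.re ≤ 0 ∧
    ∀ z : ℂ, ‖z‖ = 1 → z.re ≤ 0 →
      ‖(z - w)‖ ≤ 2 * ‖(z - ζ)‖ := by
  have hS : IsCompact {w : ℂ | ‖w‖ = 1 ∧ w.re ≤ 0} := by
    apply Metric.isCompact_of_isClosed_isBounded
    · exact (isClosed_eq continuous_norm continuous_const).inter
        (isClosed_le Complex.continuous_re continuous_const)
    · rw [Metric.isBounded_iff_subset_closedBall 0]
      refine ⟨1, fun w hw => ?_⟩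
      simp only [Metric.mem_closedBall, Complex.dist_eq, sub_zero]
      exact le_of_eq hw.1
  have hne : ({w : ℂ | ‖w‖ = 1 ∧ w.re ≤ 0}).Nonempty := ⟨-1, by simp, by norm_num⟩
  obtain ⟨w, hwS, hmin⟩ := hS.exists_isMinOn hne
    ((continuous_norm.comp (continuous_const.sub continuous_id)).continuousOn)
  refine ⟨w, hwS.1, hwS.2, fun z hz1 hz2 => ?_⟩
  have hz : z ∈ {w : ℂ | ‖w‖ = 1 ∧ w.re ≤ 0} := ⟨hz1, hz2⟩
  have h1 : ‖(ζ - w)‖ ≤ ‖(ζ - z)‖ := hmin hz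
  have h2 : ‖(z - w)‖ ≤ ‖(z - ζ)‖ + ‖(ζ - w)‖ := by
    simpa using norm_add_le (z - ζ) (ζ - w)
  have h3 : ‖(ζ - z)‖ = ‖(z - ζ)‖ := norm_sub_rev ζ z
  linarith


def rq (w : ℂ) : ℝ[X] :=
  C (1/(2-2*w.re)) * X ^ 2 + C ((-(2*w.re)) * (1/(2-2*w.re))) * X + C (1/(2-2*w.re))

lemma rq_coeff_nonneg {w : ℂ} (hre : w.re ≤ 0) (k : ℕ) : 0 ≤ (rq w).coeff k := by
  have h2 : (0:ℝ) < 2 - 2*w.re := by linarith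
  have hc : 0 ≤ 1/(2-2*w.re) := by positivity
  have hb : 0 ≤ (-(2*w.re)) * (1/(2-2*w.re)) := by
    apply mul_nonneg (by linarith) hc
  simp only [rq, coeff_add, coeff_C_mul, coeff_X_pow, coeff_X, coeff_C]
  split_ifs <;> simp_all

lemma rq_natDegree (w : ℂ) : (rq w).natDegree ≤ 2 := by
  unfold rq; compute_degree

lemma rq_eval_one {w : ℂ} (hre : w.re ≤ 0) : (rq w).eval 1 = 1 := by
  have h2 : (2 - 2*w.re) ≠ 0 := by nlinarith
  have h1 : (1 - w.re) ≠ 0 := by linarith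
  simp only [rq, eval_add, eval_mul, eval_C, eval_X, eval_pow, one_pow, mul_one]
  field_simp
  ring

lemma rq_abs_eval {w : ℂ} (hw : ‖w‖ = 1) (hre : w.re ≤ 0) {z : ℂ}
    (hz : ‖z‖ = 1) :
    ‖(((rq w).map (algebraMap ℝ ℂ)).eval z)‖ ≤ ‖(z - w)‖ := by
  have h2 : (0:ℝ) < 2 - 2*w.re := by linarith
  have key : ((rq w).map (algebraMap ℝ ℂ)).eval z
      = ((1/(2-2*w.re) : ℝ) : ℂ) * ((z - w) * (z - (starRingEnd ℂ) w)) := by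
    have hsum : w + (starRingEnd ℂ) w = ((2*w.re : ℝ) : ℂ) := by
      rw [Complex.add_conj]
    have hprod : w * (starRingEnd ℂ) w = 1 := by
      rw [Complex.mul_conj, Complex.normSq_eq_norm_sq, hw]; norm_num
    have expand : (z - w) * (z - (starRingEnd ℂ) w)
        = z^2 - (w + (starRingEnd ℂ) w) * z + w * (starRingEnd ℂ) w := by ring
    simp only [rq, Polynomial.map_add, Polynomial.map_mul, map_C, map_X, Polynomial.map_pow,
      eval_add, eval_mul, eval_C, eval_X, eval_pow, expand, hsum, hprod]
    have hcast : ((2 - 2*w.re : ℝ) : ℂ) ≠ 0 := by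
      exact Complex.ofReal_ne_zero.mpr h2.ne'
    push_cast at hcast ⊢
    field_simp
    simp only [Complex.coe_algebraMap] at *
    ring
  rw [key, norm_mul, norm_mul]
  have hcw : ‖(z - (starRingEnd ℂ) w)‖ ≤ 2 := by
    calc ‖(z - (starRingEnd ℂ) w)‖ ≤ ‖z‖ + ‖((starRingEnd ℂ) w)‖ :=
      norm_sub_le _ _
    _ ≤ 2 := by rw [hz, Complex.norm_conj, hw]; norm_num
  have hc : ‖(((1/(2-2*w.re) : ℝ) : ℂ))‖ = 1/(2-2*w.re) := by
    rw [Complex.norm_real, Real.norm_eq_abs, abs_of_pos (by positivity)]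
  rw [hc]
  have hcle : 1/(2-2*w.re) ≤ 1/2 := by
    apply one_div_le_one_div_of_le <;> linarith
  calc 1/(2-2*w.re) * (‖(z-w)‖ * ‖(z - (starRingEnd ℂ) w)‖)
      ≤ 1/2 * (‖(z-w)‖ * 2) := by
        apply mul_le_mul hcle _ (by positivity) (by norm_num)
        exact mul_le_mul_of_nonneg_left hcw (by positivity)
    _ = ‖(z - w)‖ := by ring


lemma exists_big_point (P : ℂ[X])
    (hnorm : ∫ y in (0:ℝ)..1,
      ‖(P.eval (Complex.exp (2 * ↑π * Complex.I * ↑y)))‖ ^ 2 = 1) :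
    ∃ z₀ : ℂ, ‖z₀‖ = 1 ∧ 1 ≤ ‖(P.eval z₀)‖ := by
  set f : ℝ → ℝ := fun y => ‖(P.eval (Complex.exp (2 * ↑π * Complex.I * ↑y)))‖ ^ 2
    with hf
  have hcont : Continuous f := by
    apply Continuous.pow
    apply continuous_norm.comp
    exact P.continuous.comp (Complex.continuous_exp.comp
      (continuous_const.mul Complex.continuous_ofReal))
  obtain ⟨y₀, hy₀, hmax⟩ := isCompact_Icc.exists_isMaxOn (α := ℝ)
    (Set.nonempty_Icc.mpr zero_le_one) hcont.continuousOn
  have h1 : (1:ℝ) ≤ f y₀ := by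
    have hint : ∫ y in (0:ℝ)..1, f y ≤ ∫ _y in (0:ℝ)..1, f y₀ :=
      intervalIntegral.integral_mono_on zero_le_one (hcont.intervalIntegrable _ _)
        intervalIntegrable_const (fun x hx => hmax hx)
    rw [hnorm] at hint
    simpa using hint
  refine ⟨Complex.exp (2*↑π*Complex.I*↑y₀), ?_, ?_⟩
  · rw [show (2*(π:ℂ)*Complex.I*(y₀:ℂ)) = ((2*π*y₀ : ℝ):ℂ) * Complex.I by push_cast; ring]
    exact Complex.norm_exp_ofReal_mul_I _
  · simp only [hf] at h1
    nlinarith [norm_nonneg (P.eval (Complex.exp (2*↑π*Complex.I*↑y₀)))]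


lemma norm_ms_prod (s : Multiset ℂ) : ‖s.prod‖ = (s.map (fun x => ‖x‖)).prod := by
  induction s using Multiset.induction_on <;> simp [*]

lemma abs_eval_eq (P : ℂ[X]) (z : ℂ) :
    ‖(P.eval z)‖ = ‖P.leadingCoeff‖ *
      (P.roots.map (fun ζ => ‖(z - ζ)‖)).prod := by
  conv_lhs => rw [(IsAlgClosed.splits P).eq_prod_roots]
  rw [eval_mul, eval_C, norm_mul, Polynomial.eval_multiset_prod, Multiset.map_map,
    norm_ms_prod, Multiset.map_map]
  congr 1
  refine congrArg _ (Multiset.map_congr rfl ?_)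
  intro ζ _
  simp

lemma prod_map_const_mul (c : ℝ) (f : ℂ → ℝ) (s : Multiset ℂ) :
    (s.map (fun x => c * f x)).prod = c ^ Multiset.card s * (s.map f).prod := by
  induction s using Multiset.induction_on with
  | empty => simp
  | cons a s ih =>
    simp only [Multiset.map_cons, Multiset.prod_cons, ih, Multiset.card_cons, pow_succ]
    ring

lemma key_ineq (P : ℂ[X]) (N : ℕ) (hdeg : P.natDegree ≤ N)
    (hz₀ : ∃ z₀, ‖z₀‖ = 1 ∧ 1 ≤ ‖(P.eval z₀)‖)
    {z : ℂ} (hz : ‖z‖ = 1) :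
    (2:ℝ) ^ Multiset.card (P.roots.filter (fun ζ => ‖ζ‖ < 3/2)) ≤
      6 ^ N * (‖P.leadingCoeff‖ *
        ((P.roots.filter (fun ζ => ¬ ‖ζ‖ < 3/2)).map
          (fun ζ => ‖(z - ζ)‖)).prod) := by
  obtain ⟨z₀, hz₀1, hz₀2⟩ := hz₀
  set a := ‖P.leadingCoeff‖ with ha
  set small := P.roots.filter (fun ζ => ‖ζ‖ < 3/2) with hsmall
  set big := P.roots.filter (fun ζ => ¬ ‖ζ‖ < 3/2) with hbig
  set s := Multiset.card small with hs
  set b := Multiset.card big with hb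
  set Ps := (small.map (fun ζ => 1 + ‖ζ‖)).prod with hPs
  set Pb1 := (big.map (fun ζ => 1 + ‖ζ‖)).prod with hPb1
  set Pb := (big.map (fun ζ => ‖(z - ζ)‖)).prod with hPb
  have hsplit : small + big = P.roots := Multiset.filter_add_not _ _
  have hcard : s + b ≤ N := by
    have := Polynomial.card_roots' P
    have h2 : s + b = Multiset.card P.roots := by
      rw [← hsplit, Multiset.card_add]
    omega
  have hanneg : 0 ≤ a := norm_nonneg _
  have hPsnneg : 0 ≤ Ps := Multiset.prod_nonneg (by
    intro x hx; obtain ⟨ζ, _, rfl⟩ := Multiset.mem_map.mp hx; positivity)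
  have hPb1nneg : 0 ≤ Pb1 := Multiset.prod_nonneg (by
    intro x hx; obtain ⟨ζ, _, rfl⟩ := Multiset.mem_map.mp hx; positivity)
  have hPbnneg : 0 ≤ Pb := Multiset.prod_nonneg (by
    intro x hx; obtain ⟨ζ, _, rfl⟩ := Multiset.mem_map.mp hx; positivity)
  -- step 1 : 1 ≤ a * (Ps * Pb1)
  have f1 : 1 ≤ a * (Ps * Pb1) := by
    have e1 : ‖(P.eval z₀)‖ = a *
        (P.roots.map (fun ζ => ‖(z₀ - ζ)‖)).prod := abs_eval_eq P z₀
    have e2 : (P.roots.map (fun ζ => ‖(z₀ - ζ)‖)).prod ≤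
        (P.roots.map (fun ζ => 1 + ‖ζ‖)).prod := by
      apply Multiset.prod_map_le_prod_map₀
      · intro ζ _; positivity
      · intro ζ _
        calc ‖(z₀ - ζ)‖ ≤ ‖z₀‖ + ‖ζ‖ := norm_sub_le _ _
          _ = 1 + ‖ζ‖ := by rw [hz₀1]
    have e3 : (P.roots.map (fun ζ => 1 + ‖ζ‖)).prod = Ps * Pb1 := by
      rw [← hsplit, Multiset.map_add, Multiset.prod_add]
    calc (1:ℝ) ≤ ‖(P.eval z₀)‖ := hz₀2
      _ = a * (P.roots.map (fun ζ => ‖(z₀ - ζ)‖)).prod := e1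
      _ ≤ a * (P.roots.map (fun ζ => 1 + ‖ζ‖)).prod :=
          mul_le_mul_of_nonneg_left e2 hanneg
      _ = a * (Ps * Pb1) := by rw [e3]
  have f2 : Ps ≤ (5/2:ℝ)^s := by
    have : Ps ≤ (small.map (fun _ => (5/2:ℝ))).prod := by
      apply Multiset.prod_map_le_prod_map₀
      · intro ζ _; positivity
      · intro ζ hζ
        have := (Multiset.mem_filter.mp hζ).2
        linarith
    simpa [Multiset.map_const', Multiset.prod_replicate] using this
  have f3 : Pb1 ≤ 5^b * Pb := by
    have h1 : Pb1 ≤ (big.map (fun ζ => 5 * ‖(z - ζ)‖)).prod := by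
      apply Multiset.prod_map_le_prod_map₀
      · intro ζ _; positivity
      · intro ζ hζ
        have h32 : ¬ ‖ζ‖ < 3/2 := (Multiset.mem_filter.mp hζ).2
        have htri : ‖ζ‖ - ‖z‖ ≤ ‖(z - ζ)‖ := by
          calc ‖ζ‖ - ‖z‖ ≤ ‖(ζ - z)‖ := norm_sub_norm_le ζ z
            _ = ‖(z - ζ)‖ := norm_sub_rev ζ z
        rw [hz] at htri
        push_neg at h32
        linarith
    have h2 : (big.map (fun ζ => 5 * ‖(z - ζ)‖)).prod = 5^b * Pb :=
      prod_map_const_mul 5 _ big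
    linarith
  have h56 : (5:ℝ)^(s+b) ≤ 6^N := by
    calc (5:ℝ)^(s+b) ≤ 6^(s+b) := pow_le_pow_left₀ (by norm_num) (by norm_num) _
      _ ≤ 6^N := pow_le_pow_right₀ (by norm_num) hcard
  have step : 1 ≤ a * ((5/2)^s * (5^b * Pb)) := by
    calc (1:ℝ) ≤ a * (Ps * Pb1) := f1
      _ ≤ a * ((5/2)^s * (5^b * Pb)) := by
          apply mul_le_mul_of_nonneg_left _ hanneg
          exact mul_le_mul f2 f3 hPb1nneg (by positivity)
  have e : ((5:ℝ)/2)^s * 2^s = 5^s := by rw [← mul_pow]; norm_num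
  calc (2:ℝ)^s = 1 * 2^s := (one_mul _).symm
    _ ≤ (a * ((5/2)^s * (5^b * Pb))) * 2^s :=
        mul_le_mul_of_nonneg_right step (by positivity)
    _ = (a * Pb) * ((5/2)^s * 2^s * 5^b) := by ring
    _ = (a * Pb) * 5^(s+b) := by rw [e, ← pow_add]
    _ ≤ (a * Pb) * 6^N := mul_le_mul_of_nonneg_left h56 (mul_nonneg hanneg hPbnneg)
    _ = 6^N * (a * Pb) := mul_comm _ _


-- misc multiset helpers
lemma coeff_mul_nonneg {p q : ℝ[X]} (hp : ∀ k, 0 ≤ p.coeff k) (hq : ∀ k, 0 ≤ q.coeff k) (k : ℕ) :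
    0 ≤ (p * q).coeff k := by
  rw [Polynomial.coeff_mul]
  exact Finset.sum_nonneg fun x _ => mul_nonneg (hp x.1) (hq x.2)

lemma coeff_pow_nonneg {p : ℝ[X]} (hp : ∀ k, 0 ≤ p.coeff k) (n : ℕ) :
    ∀ k, 0 ≤ (p ^ n).coeff k := by
  induction n with
  | zero =>
    intro k
    simp only [pow_zero, Polynomial.coeff_one]
    split_ifs <;> norm_num
  | succ n ih =>
    intro k
    rw [pow_succ]
    exact coeff_mul_nonneg ih hp k

lemma coeff_msprod_nonneg (s : Multiset ℝ[X]) (h : ∀ p ∈ s, ∀ k, 0 ≤ p.coeff k) :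
    ∀ k, 0 ≤ s.prod.coeff k := by
  induction s using Multiset.induction_on with
  | empty =>
    intro k
    simp only [Multiset.prod_zero, Polynomial.coeff_one]
    split_ifs <;> norm_num
  | cons a s ih =>
    intro k
    rw [Multiset.prod_cons]
    exact coeff_mul_nonneg (h a (Multiset.mem_cons_self a s))
      (ih (fun p hp => h p (Multiset.mem_cons_of_mem hp))) k

lemma natDegree_msprod_le (s : Multiset ℂ) (f : ℂ → ℝ[X]) (hf : ∀ ζ, (f ζ).natDegree ≤ 2) :
    ((s.map f).prod).natDegree ≤ 2 * Multiset.card s := by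
  induction s using Multiset.induction_on with
  | empty => simp
  | cons a s ih =>
    rw [Multiset.map_cons, Multiset.prod_cons]
    calc ((f a) * (s.map f).prod).natDegree
        ≤ (f a).natDegree + ((s.map f).prod).natDegree := natDegree_mul_le
      _ ≤ 2 + 2 * Multiset.card s := add_le_add (hf a) ih
      _ = 2 * Multiset.card (a ::ₘ s) := by rw [Multiset.card_cons]; ring

lemma sqrt2div2 : Real.sqrt 2 / 2 = (2:ℝ)^(-(1:ℝ)/2) := by
  have hs : (0:ℝ) ≤ Real.sqrt 2 / 2 := by positivity
  have hc : (0:ℝ) ≤ (2:ℝ)^(-(1:ℝ)/2) := by positivity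
  have hsq : (Real.sqrt 2 / 2)^2 = ((2:ℝ)^(-(1:ℝ)/2))^2 := by
    rw [div_pow, Real.sq_sqrt (by norm_num : (0:ℝ) ≤ 2)]
    rw [← Real.rpow_natCast ((2:ℝ)^(-(1:ℝ)/2)) 2, ← Real.rpow_mul (by norm_num)]
    rw [show (-(1:ℝ)/2) * (2:ℕ) = -1 by push_cast; ring]
    rw [Real.rpow_neg_one]
    norm_num
  calc Real.sqrt 2 / 2 = Real.sqrt ((Real.sqrt 2 / 2)^2) := (Real.sqrt_sq hs).symm
    _ = Real.sqrt (((2:ℝ)^(-(1:ℝ)/2))^2) := by rw [hsq]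
    _ = (2:ℝ)^(-(1:ℝ)/2) := Real.sqrt_sq hc

lemma pow_half_pow (m : ℕ) : ((2:ℝ)^(-(1:ℝ)/2))^m = (2:ℝ)^(-(m:ℝ)/2) := by
  rw [← Real.rpow_natCast ((2:ℝ)^(-(1:ℝ)/2)) m, ← Real.rpow_mul (by norm_num)]
  congr 1
  ring

def proj (ζ : ℂ) : ℂ := Classical.choose (exists_proj' ζ)

lemma proj_spec (ζ : ℂ) : ‖(proj ζ)‖ = 1 ∧ (proj ζ).re ≤ 0 ∧
    ∀ z : ℂ, ‖z‖ = 1 → z.re ≤ 0 →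
      ‖(z - proj ζ)‖ ≤ 2 * ‖(z - ζ)‖ :=
  Classical.choose_spec (exists_proj' ζ)

end

/-- For every `N ≥ 1`, `m ≥ 0`, and every complex polynomial `P` of degree at
most `N` with unit `L²` norm on the circle, there is a polynomial `Q = ∑ β_k z^k` of degree at
most `2m + 7N` with nonnegative real coefficients summing to `1`, whose coefficients with
indices `m + 3N ≤ k ≤ m + 4N` all equal `1/(m + 4N + 1)`, and with
`|Q(z)| ≤ 6^N · 2^{-m/2} · |P(z)|` on the left unit semicircle. -/
theorem exists_flat_middle_majorant (N : ℕ) (hN : 1 ≤ N) (m : ℕ)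
    (P : Polynomial ℂ) (hdeg : P.natDegree ≤ N)
    (hnorm : ∫ y in (0:ℝ)..1,
        ‖P.eval (Complex.exp (2 * π * Complex.I * y))‖ ^ 2 = 1) :
    ∃ Q : Polynomial ℂ,
      Q.natDegree ≤ 2 * m + 7 * N ∧
      (∀ k : ℕ, (Q.coeff k).im = 0 ∧ 0 ≤ (Q.coeff k).re) ∧
      Q.eval 1 = 1 ∧
      (∀ k : ℕ, m + 3 * N ≤ k → k ≤ m + 4 * N →
        Q.coeff k = (1 : ℂ) / (m + 4 * N + 1)) ∧
      ∀ z : ℂ, ‖z‖ = 1 → z.re ≤ 0 →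
        ‖Q.eval z‖ ≤ 6 ^ N * (2 : ℝ) ^ (-(m : ℝ) / 2) * ‖P.eval z‖ := by

  classical
  set L : ℕ := m + 4 * N + 1 with hL
  have hLpos : 0 < L := by omega
  set small : Multiset ℂ := P.roots.filter (fun ζ => ‖ζ‖ < 3/2) with hsmalldef
  set big : Multiset ℂ := P.roots.filter (fun ζ => ¬ ‖ζ‖ < 3/2) with hbigdef
  set s : ℕ := Multiset.card small with hsdef
  have hsN : s ≤ N :=
    le_trans (Multiset.card_le_card (Multiset.filter_le _ _))
      (le_trans (Polynomial.card_roots' P) hdeg)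
  set Abase : ℝ[X] := (C (1/2:ℝ) * (X + 1))^m with hAbase
  set Aprod : ℝ[X] := (small.map (fun ζ => rq (proj ζ))).prod with hAprod
  set A : ℝ[X] := Abase * Aprod with hA
  set B : ℝ[X] := C (1/(L:ℝ)) * ∑ j ∈ Finset.range L, X^j with hB
  -- basic facts about B
  have hBcoeff : ∀ j, B.coeff j = if j < L then 1/(L:ℝ) else 0 := by
    intro j
    rw [hB, coeff_C_mul, finset_sum_coeff]
    simp only [coeff_X_pow]
    rw [Finset.sum_ite_eq (Finset.range L) j (fun _ => (1:ℝ))]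
    simp only [Finset.mem_range]
    split_ifs <;> simp
  have hBnn : ∀ j, 0 ≤ B.coeff j := by
    intro j
    rw [hBcoeff]
    split_ifs <;> positivity
  have hB1 : B.eval 1 = 1 := by
    rw [hB, eval_mul, eval_C, eval_finset_sum]
    simp only [eval_pow, eval_X, one_pow]
    rw [Finset.sum_const, Finset.card_range, nsmul_eq_mul, mul_one]
    field_simp
  have hBdeg : B.natDegree ≤ m + 4 * N := by
    refine le_trans natDegree_mul_le ?_
    rw [natDegree_C, zero_add]
    apply natDegree_sum_le_of_forall_le
    intro j hj
    rw [natDegree_X_pow]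
    have := Finset.mem_range.mp hj
    omega
  -- basic facts about A
  have hAnn : ∀ k, 0 ≤ A.coeff k := by
    intro k
    apply coeff_mul_nonneg
    · apply coeff_pow_nonneg
      intro j
      rw [coeff_C_mul, coeff_add, coeff_X, coeff_one]
      split_ifs <;> norm_num
    · apply coeff_msprod_nonneg
      intro p hp
      obtain ⟨ζ, _, rfl⟩ := Multiset.mem_map.mp hp
      exact rq_coeff_nonneg (proj_spec ζ).2.1
  have hA1 : A.eval 1 = 1 := by
    rw [hA, eval_mul, hAbase, eval_pow, eval_mul, eval_C, eval_add, eval_X, eval_one]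
    rw [Polynomial.eval_multiset_prod, Multiset.map_map]
    rw [Multiset.prod_eq_one]
    · norm_num
    · intro x hx
      obtain ⟨ζ, _, rfl⟩ := Multiset.mem_map.mp hx
      exact rq_eval_one (proj_spec ζ).2.1
  have hAdeg : A.natDegree ≤ m + 2 * N := by
    refine le_trans natDegree_mul_le (add_le_add ?_ ?_)
    · refine le_trans natDegree_pow_le ?_
      have h1 : (C (1/2:ℝ) * (X + 1)).natDegree ≤ 1 := by compute_degree
      calc m * (C (1/2:ℝ) * (X + 1)).natDegree ≤ m * 1 := Nat.mul_le_mul_left m h1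
        _ = m := mul_one m
    · calc Aprod.natDegree ≤ 2 * s := natDegree_msprod_le small _ (fun ζ => rq_natDegree _)
        _ ≤ 2 * N := by omega
  refine ⟨(A * B).map (algebraMap ℝ ℂ), ?_, ?_, ?_, ?_, ?_⟩
  · -- degree
    refine le_trans natDegree_map_le (le_trans natDegree_mul_le ?_)
    omega
  · -- coefficients real and nonneg
    intro k
    rw [coeff_map]
    constructor
    · simp [Complex.ofReal_im]
    · simp only [Complex.coe_algebraMap, Complex.ofReal_re]
      exact coeff_mul_nonneg hAnn hBnn k
  · -- eval at 1
    rw [eval_one_map, eval_mul, hA1, hB1, mul_one, map_one]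
  · -- flat middle coefficients
    intro k hk1 hk2
    rw [coeff_map]
    have hcoe : (A * B).coeff k = 1/(L:ℝ) := by
      rw [Polynomial.coeff_mul, Finset.Nat.sum_antidiagonal_eq_sum_range_succ_mk]
      have hstep : ∀ i ∈ Finset.range (k+1),
          A.coeff i * B.coeff (k - i) = A.coeff i * (1/(L:ℝ)) := by
        intro i _
        rw [hBcoeff]
        have : k - i < L := by omega
        simp [this]
      rw [Finset.sum_congr rfl hstep, ← Finset.sum_mul]
      have hsum : A.eval 1 = ∑ i ∈ Finset.range (k+1), A.coeff i := by
        rw [Polynomial.eval_eq_sum_range' (n := k+1) (lt_of_le_of_lt hAdeg (by omega)) 1]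
        simp
      rw [← hsum, hA1, one_mul]
    rw [hcoe]
    rw [hL]
    push_cast
    norm_num
  · -- the bound on the left semicircle
    intro z hz1 hz2
    have hPz : ‖(P.eval z)‖ = ‖P.leadingCoeff‖ *
        ((small.map (fun ζ => ‖(z - ζ)‖)).prod *
         (big.map (fun ζ => ‖(z - ζ)‖)).prod) := by
      rw [abs_eval_eq P z]
      congr 1
      rw [← Multiset.prod_add, ← Multiset.map_add]
      rw [hsmalldef, hbigdef, Multiset.filter_add_not]
    set a : ℝ := ‖P.leadingCoeff‖ with hadef
    set Ps : ℝ := (small.map (fun ζ => ‖(z - ζ)‖)).prod with hPsdef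
    set Pb : ℝ := (big.map (fun ζ => ‖(z - ζ)‖)).prod with hPbdef
    have hPsnn : 0 ≤ Ps := Multiset.prod_nonneg (by
      intro x hx; obtain ⟨ζ, _, rfl⟩ := Multiset.mem_map.mp hx; positivity)
    have hPbnn : 0 ≤ Pb := Multiset.prod_nonneg (by
      intro x hx; obtain ⟨ζ, _, rfl⟩ := Multiset.mem_map.mp hx; positivity)
    have hann : 0 ≤ a := norm_nonneg _
    set cm : ℝ := (2:ℝ)^(-(m:ℝ)/2) with hcm
    have hcmpos : 0 < cm := by rw [hcm]; positivity
    have key : (2:ℝ)^s ≤ 6^N * (a * Pb) :=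
      key_ineq P N hdeg (exists_big_point P hnorm) hz1
    -- split the evaluation
    have heval : ((A * B).map (algebraMap ℝ ℂ)).eval z =
        ((Abase.map (algebraMap ℝ ℂ)).eval z) *
        ((Aprod.map (algebraMap ℝ ℂ)).eval z) *
        ((B.map (algebraMap ℝ ℂ)).eval z) := by
      rw [hA, Polynomial.map_mul, Polynomial.map_mul, eval_mul, eval_mul]
    have hbase : ‖((Abase.map (algebraMap ℝ ℂ)).eval z)‖ ≤ cm := by
      rw [hAbase, Polynomial.map_pow, Polynomial.map_mul, map_C, Polynomial.map_add, map_X,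
        Polynomial.map_one, eval_pow, eval_mul, eval_C, eval_add, eval_X, eval_one, norm_pow]
      have hz1' : ‖(z + 1)‖ ≤ Real.sqrt 2 := by
        rw [← Real.sqrt_sq (norm_nonneg (z+1))]
        apply Real.sqrt_le_sqrt
        rw [Complex.sq_norm, Complex.normSq_apply]
        have hns : z.re^2 + z.im^2 = 1 := by
          have := Complex.sq_norm z
          rw [hz1] at this
          rw [Complex.normSq_apply] at this
          nlinarith
        simp only [Complex.add_re, Complex.add_im, Complex.one_re, Complex.one_im]
        nlinarith
      have habs : ‖((algebraMap ℝ ℂ) (1/2) * (z + 1))‖ ≤ (2:ℝ)^(-(1:ℝ)/2) := by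
        rw [norm_mul]
        have h12 : ‖((algebraMap ℝ ℂ) (1/2:ℝ))‖ = 1/2 := by
          rw [Complex.coe_algebraMap, Complex.norm_real, Real.norm_eq_abs]
          norm_num
        rw [h12, ← sqrt2div2]
        calc 1/2 * ‖(z+1)‖ ≤ 1/2 * Real.sqrt 2 := by linarith
          _ = Real.sqrt 2 / 2 := by ring
      calc ‖((algebraMap ℝ ℂ) (1/2) * (z + 1))‖ ^ m ≤ ((2:ℝ)^(-(1:ℝ)/2))^m := by
            apply pow_le_pow_left₀ (norm_nonneg _) habs
        _ = cm := pow_half_pow m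
    have hprodpart : ‖((Aprod.map (algebraMap ℝ ℂ)).eval z)‖ ≤ 2^s * Ps := by
      rw [hAprod, Polynomial.map_multiset_prod, Multiset.map_map,
        Polynomial.eval_multiset_prod, Multiset.map_map, norm_ms_prod, Multiset.map_map]
      have hle : ((small.map fun ζ =>
          ‖(((rq (proj ζ)).map (algebraMap ℝ ℂ)).eval z)‖)).prod ≤
          (small.map (fun ζ => 2 * ‖(z - ζ)‖)).prod := by
        apply Multiset.prod_map_le_prod_map₀
        · intro ζ _; positivity
        · intro ζ _
          calc ‖(((rq (proj ζ)).map (algebraMap ℝ ℂ)).eval z)‖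
              ≤ ‖(z - proj ζ)‖ :=
                rq_abs_eval (proj_spec ζ).1 (proj_spec ζ).2.1 hz1
            _ ≤ 2 * ‖(z - ζ)‖ := (proj_spec ζ).2.2 z hz1 hz2
      calc ((small.map fun ζ =>
            ‖(((rq (proj ζ)).map (algebraMap ℝ ℂ)).eval z)‖)).prod
          ≤ (small.map (fun ζ => 2 * ‖(z - ζ)‖)).prod := hle
        _ = 2^s * Ps := prod_map_const_mul 2 _ small
    have hBabs : ‖((B.map (algebraMap ℝ ℂ)).eval z)‖ ≤ 1 := by
      rw [hB, Polynomial.map_mul, map_C, Polynomial.map_sum]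
      simp only [Polynomial.map_pow, map_X]
      rw [eval_mul, eval_C, norm_mul]
      have h1 : ‖((algebraMap ℝ ℂ) (1/(L:ℝ)))‖ = 1/(L:ℝ) := by
        rw [Complex.coe_algebraMap, Complex.norm_real, Real.norm_eq_abs]
        rw [abs_of_pos]
        positivity
      have h2 : ‖((∑ j ∈ Finset.range L, (X:ℂ[X])^j).eval z)‖ ≤ L := by
        rw [eval_finset_sum]
        calc ‖(∑ j ∈ Finset.range L, ((X:ℂ[X])^j).eval z)‖
            ≤ ∑ j ∈ Finset.range L, ‖(((X:ℂ[X])^j).eval z)‖ :=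
              norm_sum_le _ _
          _ = ∑ j ∈ Finset.range L, 1 := by
              apply Finset.sum_congr rfl
              intro j _
              rw [eval_pow, eval_X, norm_pow, hz1, one_pow]
          _ = L := by simp
      have hLne : (L:ℝ) ≠ 0 := by positivity
      calc ‖((algebraMap ℝ ℂ) (1/(L:ℝ)))‖ *
            ‖((∑ j ∈ Finset.range L, (X:ℂ[X])^j).eval z)‖
          ≤ (1/(L:ℝ)) * L := by
            rw [h1]
            apply mul_le_mul_of_nonneg_left h2 (by positivity)
        _ = 1 := by field_simp
    -- put it together
    rw [heval, norm_mul, norm_mul, hPz]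
    calc ‖((Abase.map (algebraMap ℝ ℂ)).eval z)‖ *
          ‖((Aprod.map (algebraMap ℝ ℂ)).eval z)‖ *
          ‖((B.map (algebraMap ℝ ℂ)).eval z)‖
        ≤ cm * (2^s * Ps) * 1 := by
          apply mul_le_mul _ hBabs (norm_nonneg _) (by positivity)
          apply mul_le_mul hbase hprodpart (norm_nonneg _) (le_of_lt hcmpos)
      _ = cm * Ps * 2^s := by ring
      _ ≤ cm * Ps * (6^N * (a * Pb)) := by
          apply mul_le_mul_of_nonneg_left key (by positivity)
      _ = 6^N * cm * (a * (Ps * Pb)) := by ring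
end

section
/- Let w ∈ ℂ satisfy |w| ≤ 1 and suppose the absolute value of the argument of w is at least π/3 (i.e., Re w ≤ |w|·cos(π/3) = |w|/2). Then 0 lies in the convex hull (over ℝ, in ℂ ≅ ℝ²) of the four points 1, w, w², w³; equivalently, there exist α₀, α₁, α₂, α₃ ≥ 0 with α₀ + α₁ + α₂ + α₃ = 1 and α₀ + α₁ w + α₂ w² + α₃ w³ = 0. -/
/-!
The quadratic `z² - 2 Re w · z + |w|²` vanishes at `w` (its roots are `w` and `w̄`). If `Re w ≤ 0`
its coefficients are already nonnegative. If `Re w > 0`, multiplying it by `2 Re w · z + |w|²`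
kills the linear term and gives `|w|⁴ + (|w|² - 4 (Re w)²) z² + 2 Re w · z³`, whose coefficients
are nonnegative exactly when `Re w ≤ |w| / 2`. Normalising the coefficients gives convex weights.
-/

open Complex

theorem exists_convex_weights_of_sum_smul_eq_zero {E ι : Type*} [AddCommGroup E] [Module ℝ E]
    [Fintype ι] {c : ι → ℝ} {v : ι → E} (hc : ∀ i, 0 ≤ c i) (hpos : 0 < ∑ i, c i)
    (hcv : ∑ i, c i • v i = 0) :
    ∃ α : ι → ℝ, (∀ i, 0 ≤ α i) ∧ ∑ i, α i = 1 ∧ ∑ i, α i • v i = 0 := by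
  refine ⟨fun i => (∑ j, c j)⁻¹ * c i, fun i => by have := hc i; positivity, ?_, ?_⟩
  · rw [← Finset.mul_sum, inv_mul_cancel₀ hpos.ne']
  · simp only [mul_smul, ← Finset.smul_sum, hcv, smul_zero]

namespace Complex

theorem sq_sub_two_re_mul_add_normSq (w : ℂ) : w ^ 2 - 2 * w.re * w + normSq w = 0 := by
  have hsum := add_conj w
  have hprod := mul_conj w
  push_cast at hsum
  linear_combination w * hsum - hprod

theorem normSq_sq_add_mul_sq_add_mul_cube (w : ℂ) :
    normSq w ^ 2 + (normSq w - 4 * w.re ^ 2) * w ^ 2 + 2 * w.re * w ^ 3 = 0 := by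
  linear_combination (2 * w.re * w + normSq w) * sq_sub_two_re_mul_add_normSq w

theorem four_mul_re_sq_le_normSq {w : ℂ} (hre : 0 ≤ w.re) (harg : w.re ≤ ‖w‖ / 2) :
    4 * w.re ^ 2 ≤ normSq w := by
  rw [normSq_eq_norm_sq]
  nlinarith

theorem exists_nonneg_combination_powers_eq_zero {w : ℂ} (harg : w.re ≤ ‖w‖ / 2) :
    ∃ c : Fin 4 → ℝ, (∀ i, 0 ≤ c i) ∧ 0 < ∑ i, c i ∧ ∑ i, c i • w ^ (i : ℕ) = 0 := by
  rcases le_or_gt w.re 0 with hre | hre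
  · refine ⟨![normSq w, -2 * w.re, 1, 0], ?_, ?_, ?_⟩
    · intro i
      fin_cases i <;> simp [normSq_nonneg, mul_nonpos_iff, hre]
    · simp only [Fin.sum_univ_four, Matrix.cons_val]
      nlinarith [normSq_nonneg w]
    · simp [Fin.sum_univ_four, real_smul]
      linear_combination sq_sub_two_re_mul_add_normSq w
  · have hdisc := four_mul_re_sq_le_normSq hre.le harg
    refine ⟨![normSq w ^ 2, 0, normSq w - 4 * w.re ^ 2, 2 * w.re], ?_, ?_, ?_⟩
    · intro i
      fin_cases i <;> simp [hre.le, hdisc, sq_nonneg]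
    · simp only [Fin.sum_univ_four, Matrix.cons_val]
      nlinarith [sq_nonneg (normSq w)]
    · simp [Fin.sum_univ_four, real_smul]
      linear_combination normSq_sq_add_mul_sq_add_mul_cube w

end Complex

theorem zero_mem_convexHull_powers_general (w : ℂ)
    (harg : w.re ≤ ‖w‖ / 2) :
    (0 : ℂ) ∈ convexHull ℝ {1, w, w ^ 2, w ^ 3} ∧
    ∃ α₀ α₁ α₂ α₃ : ℝ, 0 ≤ α₀ ∧ 0 ≤ α₁ ∧ 0 ≤ α₂ ∧ 0 ≤ α₃ ∧
      α₀ + α₁ + α₂ + α₃ = 1 ∧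
      (α₀ : ℂ) + α₁ * w + α₂ * w ^ 2 + α₃ * w ^ 3 = 0 := by
  obtain ⟨c, hc, hpos, hcw⟩ := exists_nonneg_combination_powers_eq_zero harg
  obtain ⟨α, hα, hsum, hαw⟩ := exists_convex_weights_of_sum_smul_eq_zero hc hpos hcw
  refine ⟨?_, α 0, α 1, α 2, α 3, hα 0, hα 1, hα 2, hα 3, by simpa [Fin.sum_univ_four] using hsum,
    by simpa [Fin.sum_univ_four, real_smul] using hαw⟩
  rw [← hαw]
  refine (convex_convexHull ℝ _).sum_mem (fun i _ => hα i) hsum fun i _ => subset_convexHull ℝ _ ?_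
  fin_cases i <;> simp

/-- If `w ∈ ℂ` satisfies `|w| ≤ 1` and `Re w ≤ |w|/2` (i.e. the argument of
`w` has absolute value at least `π/3`), then `0` lies in the convex hull of `1, w, w², w³`:
there exist `α₀, α₁, α₂, α₃ ≥ 0` with `α₀ + α₁ + α₂ + α₃ = 1` and
`α₀ + α₁ w + α₂ w² + α₃ w³ = 0`. -/
theorem zero_mem_convexHull_powers (w : ℂ) (hw : ‖w‖ ≤ 1)
    (harg : w.re ≤ ‖w‖ / 2) :
    (0 : ℂ) ∈ convexHull ℝ {1, w, w ^ 2, w ^ 3} ∧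
    ∃ α₀ α₁ α₂ α₃ : ℝ, 0 ≤ α₀ ∧ 0 ≤ α₁ ∧ 0 ≤ α₂ ∧ 0 ≤ α₃ ∧
      α₀ + α₁ + α₂ + α₃ = 1 ∧
      (α₀ : ℂ) + α₁ * w + α₂ * w ^ 2 + α₃ * w ^ 3 = 0 :=
  zero_mem_convexHull_powers_general w harg
end

section
/- Let μ be the Borel measure on ℝ defined as the symmetrization of ν = Σ_{n≥2} (1/(n·2ⁿ)) Σ_{k=1}^{n} δ_{(n+k)/(4πn)}, i.e., μ(E) = ν(E ∩ [0,∞)) + ν((−E) ∩ [0,∞)) for Borel sets E (so μ is symmetric, supported on [−1/(2π), 1/(2π)] \ (−1/(4π), 1/(4π)), and μ(ℝ) = 1). Then for every integer n ≥ 1 and every complex polynomial P of degree at most n with P(0) = 1, one has ∫_ℝ |P(y)|² dμ(y) ≥ 10^{−6n}. -/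
open MeasureTheory Real
open Finset Polynomial
open scoped ENNReal NNReal


-- product of distances identity
lemma aux_prod_dist (m i : ℕ) (h1 : 1 ≤ i) (h2 : i ≤ m) :
    ∏ j ∈ (Finset.Icc 1 m).erase i, |(i:ℝ) - (j:ℝ)| =
      ((Nat.factorial (i-1) * Nat.factorial (m-i) : ℕ) : ℝ) := by
  have hsplit : (Finset.Icc 1 m).erase i = Finset.Icc 1 (i-1) ∪ Finset.Icc (i+1) m := by
    ext a
    simp only [Finset.mem_erase, Finset.mem_Icc, Finset.mem_union]
    omega
  have hdisj : Disjoint (Finset.Icc 1 (i-1)) (Finset.Icc (i+1) m) := by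
    rw [Finset.disjoint_left]
    intro a ha hb
    simp only [Finset.mem_Icc] at ha hb
    omega
  rw [hsplit, Finset.prod_union hdisj]
  have e1 : ∏ j ∈ Finset.Icc 1 (i-1), |(i:ℝ) - (j:ℝ)| = ((Nat.factorial (i-1) : ℕ) : ℝ) := by
    have : ∀ j ∈ Finset.Icc 1 (i-1), |(i:ℝ) - (j:ℝ)| = ((i - j : ℕ) : ℝ) := by
      intro j hj
      simp only [Finset.mem_Icc] at hj
      rw [Nat.cast_sub (by omega), abs_of_nonneg]
      have : (j:ℝ) ≤ i := by exact_mod_cast (by omega : j ≤ i)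
      linarith
    rw [Finset.prod_congr rfl this, ← Nat.cast_prod]
    congr 1
    rw [← Finset.prod_Ico_id_eq_factorial (i-1)]
    apply Finset.prod_nbij' (fun j => i - j) (fun k => i - k) <;>
      intro a ha <;> simp only [Finset.mem_Ico, Finset.mem_Icc] at * <;> omega
  have e2 : ∏ j ∈ Finset.Icc (i+1) m, |(i:ℝ) - (j:ℝ)| = ((Nat.factorial (m-i) : ℕ) : ℝ) := by
    have : ∀ j ∈ Finset.Icc (i+1) m, |(i:ℝ) - (j:ℝ)| = ((j - i : ℕ) : ℝ) := by
      intro j hj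
      simp only [Finset.mem_Icc] at hj
      rw [Nat.cast_sub (by omega), abs_sub_comm, abs_of_nonneg]
      have : (i:ℝ) ≤ j := by exact_mod_cast (by omega : i ≤ j)
      linarith
    rw [Finset.prod_congr rfl this, ← Nat.cast_prod]
    congr 1
    rw [← Finset.prod_Ico_id_eq_factorial (m-i)]
    apply Finset.prod_nbij' (fun j => j - i) (fun k => k + i) <;>
      intro a ha <;> simp only [Finset.mem_Ico, Finset.mem_Icc] at * <;> omega
  rw [e1, e2, Nat.cast_mul]

-- factorial lower bound : n^n ≤ 3^n n!
lemma aux_factorial_lb : ∀ n : ℕ, (n:ℝ)^n ≤ 3^n * (Nat.factorial n) := by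
  intro n
  induction n with
  | zero => simp
  | succ k ih =>
    rcases Nat.eq_zero_or_pos k with rfl | hk
    · norm_num [Nat.factorial]
    · have hk' : (0:ℝ) < k := by exact_mod_cast hk
      have key : ((k:ℝ)+1)^k ≤ 3 * (k:ℝ)^k := by
        have h1 : ((k:ℝ)+1)/k ≤ Real.exp (1/k) := by
          rw [div_le_iff₀ hk']
          have := Real.add_one_le_exp (1/(k:ℝ))
          calc (k:ℝ)+1 = (1/k + 1) * k := by field_simp; ring
            _ ≤ Real.exp (1/k) * k := by
                apply mul_le_mul_of_nonneg_right this (le_of_lt hk')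
        have h2 : (((k:ℝ)+1)/k)^k ≤ Real.exp (1/(k:ℝ)) ^ k :=
          pow_le_pow_left₀ (by positivity) h1 k
        have h3 : Real.exp (1/(k:ℝ)) ^ k = Real.exp 1 := by
          rw [← Real.exp_nat_mul]
          congr 1
          field_simp
        have h4 : Real.exp 1 ≤ 3 := le_of_lt (by
          have := Real.exp_one_lt_d9; linarith)
        have h5 : (((k:ℝ)+1)/k)^k = ((k:ℝ)+1)^k / (k:ℝ)^k := div_pow _ _ _
        have hkk : (0:ℝ) < (k:ℝ)^k := by positivity
        rw [h5, div_le_iff₀ hkk] at h2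
        calc ((k:ℝ)+1)^k ≤ Real.exp (1/(k:ℝ))^k * (k:ℝ)^k := h2
          _ = Real.exp 1 * (k:ℝ)^k := by rw [h3]
          _ ≤ 3 * (k:ℝ)^k := mul_le_mul_of_nonneg_right h4 (le_of_lt hkk)
      have : ((k:ℝ)+1)^(k+1) = ((k:ℝ)+1) * ((k:ℝ)+1)^k := by ring
      push_cast
      rw [this]
      calc ((k:ℝ)+1) * ((k:ℝ)+1)^k ≤ ((k:ℝ)+1) * (3 * (k:ℝ)^k) := by
            apply mul_le_mul_of_nonneg_left key (by positivity)
        _ ≤ ((k:ℝ)+1) * (3 * (3^k * (Nat.factorial k))) := by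
            apply mul_le_mul_of_nonneg_left _ (by positivity)
            apply mul_le_mul_of_nonneg_left _ (by norm_num)
            exact_mod_cast ih
        _ = 3^(k+1) * (((k:ℝ)+1) * Nat.factorial k) := by ring
        _ = 3^(k+1) * (Nat.factorial (k+1)) := by
            rw [Nat.factorial_succ]; push_cast; ring

-- B bound numeric
lemma aux_num (n : ℕ) (hn : 1 ≤ n) :
    ((n:ℝ)+1) * ((2*((n:ℝ)+1))^n * 2^n / (Nat.factorial n)) ≤ 48^n := by
  have hF : (0:ℝ) < (Nat.factorial n : ℝ) := by exact_mod_cast Nat.factorial_pos n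
  rw [← mul_div_assoc, div_le_iff₀ hF, ← mul_assoc]
  have h1 : ((n:ℝ)+1) ≤ 2^n := by
    exact_mod_cast (Nat.lt_two_pow_self (n := n))
  have h2 : ((n:ℝ)+1)^n ≤ 2^n * (n:ℝ)^n := by
    calc ((n:ℝ)+1)^n ≤ (2*(n:ℝ))^n := by
          apply pow_le_pow_left₀ (by positivity)
          have : (1:ℝ) ≤ n := by exact_mod_cast hn
          linarith
      _ = 2^n * (n:ℝ)^n := mul_pow _ _ _
  have h3 : (n:ℝ)^n ≤ 3^n * (Nat.factorial n) := aux_factorial_lb n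
  calc ((n:ℝ)+1) * (2*((n:ℝ)+1))^n * 2^n
      = ((n:ℝ)+1) * (2^n * ((n:ℝ)+1)^n) * 2^n := by rw [mul_pow]
    _ ≤ 2^n * (2^n * (2^n * (n:ℝ)^n)) * 2^n := by
        apply mul_le_mul_of_nonneg_right _ (by positivity)
        apply mul_le_mul h1 _ (by positivity) (by positivity)
        exact mul_le_mul_of_nonneg_left h2 (by positivity)
    _ = 16^n * (n:ℝ)^n := by
        rw [show (16:ℝ)^n = 2^n*2^n*2^n*2^n by rw [show (16:ℝ) = 2*2*2*2 by norm_num, mul_pow, mul_pow, mul_pow]]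
        ring
    _ ≤ 16^n * (3^n * (Nat.factorial n)) := by
        apply mul_le_mul_of_nonneg_left h3 (by positivity)
    _ = 48^n * (Nat.factorial n) := by rw [show (48:ℝ) = 16*3 by norm_num, mul_pow]; ring

/-- key node lower bound -/
lemma aux_key (n : ℕ) (hn : 1 ≤ n) (P : Polynomial ℂ) (hdeg : P.natDegree ≤ n)
    (hP : P.eval 0 = 1) :
    ∃ i ∈ Finset.Icc 1 (n+1), ((48:ℝ)^n)⁻¹ ≤
      ‖P.eval ((((((n+1:ℕ):ℝ)) + (i:ℝ)) / (4*π*((n+1:ℕ))) : ℝ) : ℂ)‖ := by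
  classical
  set m : ℕ := n + 1 with hm
  set s : Finset ℕ := Finset.Icc 1 m with hs
  have hπ : (0:ℝ) < 4*π*m := by
    have : (0:ℝ) < m := by positivity
    have := Real.pi_pos
    positivity
  set w : ℕ → ℝ := fun k => ((m:ℝ) + k) / (4*π*m) with hw
  set v : ℕ → ℂ := fun k => ((w k : ℝ) : ℂ) with hv
  have hwsub : ∀ i j : ℕ, w i - w j = ((i:ℝ) - j) / (4*π*m) := by
    intro i j
    simp only [hw]
    field_simp
    ring
  have hvinj : Set.InjOn v s := by
    intro i hi j hj hij
    have : w i = w j := by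
      simpa [hv, Complex.ofReal_inj] using hij
    have h0 : (i:ℝ) = j := by
      have hz : ((i:ℝ) - j) / (4*π*(m:ℝ)) = 0 := by rw [← hwsub, this, sub_self]
      rw [_root_.div_eq_zero_iff] at hz
      rcases hz with h | h
      · linarith [sub_eq_zero.mp h]
      · exact absurd h (ne_of_gt hπ)
    exact_mod_cast h0
  have hcard : s.card = m := by simp [hs]
  have hdeg' : P.degree < (s.card : ℕ) := by
    rw [hcard]
    calc P.degree ≤ (P.natDegree : WithBot ℕ) := Polynomial.degree_le_natDegree
      _ ≤ (n : WithBot ℕ) := by exact_mod_cast hdeg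
      _ < (m : WithBot ℕ) := by exact_mod_cast (by omega : n < m)
  -- interpolation identity at 0
  have hsum : (1:ℂ) = ∑ i ∈ s, P.eval (v i) * (Lagrange.basis s v i).eval 0 := by
    conv_lhs => rw [← hP, Lagrange.eq_interpolate hvinj hdeg']
    rw [Lagrange.interpolate_apply, Polynomial.eval_finset_sum]
    exact Finset.sum_congr rfl (by intros; rw [Polynomial.eval_mul, Polynomial.eval_C])
  set B : ℝ := (2*(m:ℝ))^n * 2^n / (Nat.factorial n) with hB
  have hBpos : 0 < B := by
    have : (0:ℝ) < (Nat.factorial n : ℝ) := by exact_mod_cast Nat.factorial_pos n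
    positivity
  -- bound on each basis polynomial at 0
  have hbasis : ∀ i ∈ s, ‖(Lagrange.basis s v i).eval 0‖ ≤ B := by
    intro i hi
    simp only [hs, Finset.mem_Icc] at hi
    have habs : ‖(Lagrange.basis s v i).eval 0‖ =
        ∏ j ∈ s.erase i, ((m:ℝ) + j) / |(i:ℝ) - j| := by
      rw [Lagrange.basis, Polynomial.eval_prod, norm_prod]
      apply Finset.prod_congr rfl
      intro j hj
      have hji : j ≠ i := (Finset.mem_erase.mp hj).1
      have hjs : j ∈ s := (Finset.mem_erase.mp hj).2
      simp only [hs, Finset.mem_Icc] at hjs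
      have hij : (i:ℝ) ≠ j := by
        intro h
        have : i = j := by exact_mod_cast h
        exact hji this.symm
      rw [Lagrange.basisDivisor]
      rw [Polynomial.eval_mul, Polynomial.eval_C, Polynomial.eval_sub, Polynomial.eval_X,
        Polynomial.eval_C, norm_mul, norm_inv, zero_sub, norm_neg]
      have hvij : v i - v j = (((w i - w j : ℝ)) : ℂ) := by push_cast [hv]; ring
      rw [hvij, Complex.norm_real, Real.norm_eq_abs, hv, Complex.norm_real, Real.norm_eq_abs, hwsub]
      have hwj : |w j| = ((m:ℝ) + j) / (4*π*m) := by
        rw [hw, abs_of_nonneg]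
        positivity
      rw [hwj, abs_div, abs_of_pos hπ]
      have hne : |(i:ℝ) - j| ≠ 0 := abs_ne_zero.mpr (sub_ne_zero.mpr hij)
      field_simp
      ring
      have hm0 : (m:ℝ) ≠ 0 := by positivity
      calc (m:ℝ) * j * (m:ℝ)⁻¹ + (m:ℝ)^2 * (m:ℝ)⁻¹ = ((m:ℝ) * (m:ℝ)⁻¹) * (j + m) := by ring
        _ = m + j := by rw [mul_inv_cancel₀ hm0]; ring
    rw [habs, Finset.prod_div_distrib]
    have hmem : i ∈ s := by
      simp only [hs, Finset.mem_Icc]; omega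
    have hcarde : (s.erase i).card = n := by
      rw [Finset.card_erase_of_mem hmem, hcard]; omega
    have hnum : ∏ j ∈ s.erase i, ((m:ℝ) + j) ≤ (2*(m:ℝ))^n := by
      calc ∏ j ∈ s.erase i, ((m:ℝ) + j) ≤ ∏ _j ∈ s.erase i, (2*(m:ℝ)) := by
            apply Finset.prod_le_prod
            · intro j hj; positivity
            · intro j hj
              have hjs := (Finset.mem_erase.mp hj).2
              simp only [hs, Finset.mem_Icc] at hjs
              have : (j:ℝ) ≤ m := by exact_mod_cast hjs.2
              linarith
        _ = (2*(m:ℝ))^n := by rw [Finset.prod_const, hcarde]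
    have hden : (Nat.factorial n : ℝ) / 2^n ≤ ∏ j ∈ s.erase i, |(i:ℝ) - j| := by
      rw [aux_prod_dist m i hi.1 hi.2]
      rw [div_le_iff₀ (by positivity)]
      have hchoose : Nat.choose n (i-1) ≤ 2^n := by
        calc Nat.choose n (i-1) ≤ ∑ j ∈ Finset.range (n+1), Nat.choose n j :=
              Finset.single_le_sum (fun _ _ => Nat.zero_le _) (Finset.mem_range.mpr (by omega))
          _ = 2^n := Nat.sum_range_choose n
      have hfact : Nat.factorial n ≤ (Nat.factorial (i-1) * Nat.factorial (m-i)) * 2^n := by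
        have h1 : i - 1 ≤ n := by omega
        have := Nat.choose_mul_factorial_mul_factorial h1
        have hmi : n - (i-1) = m - i := by omega
        calc Nat.factorial n = Nat.choose n (i-1) * Nat.factorial (i-1) * Nat.factorial (m-i) := by
              rw [← hmi, ← this]
          _ ≤ 2^n * Nat.factorial (i-1) * Nat.factorial (m-i) := by
              apply Nat.mul_le_mul_right
              apply Nat.mul_le_mul_right
              exact hchoose
          _ = (Nat.factorial (i-1) * Nat.factorial (m-i)) * 2^n := by ring
      exact_mod_cast hfact
    have hdenpos : (0:ℝ) < (Nat.factorial n : ℝ) / 2^n := by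
      have : (0:ℝ) < (Nat.factorial n : ℝ) := by exact_mod_cast Nat.factorial_pos n
      positivity
    calc (∏ j ∈ s.erase i, ((m:ℝ) + j)) / ∏ j ∈ s.erase i, |(i:ℝ) - j|
        ≤ (2*(m:ℝ))^n / ((Nat.factorial n : ℝ) / 2^n) := by
          apply div_le_div₀ (by positivity) hnum hdenpos hden
      _ = B := by rw [hB, div_div_eq_mul_div, mul_div_assoc]
  -- conclude
  by_contra hcon
  push_neg at hcon
  have hlt : ∀ i ∈ s, ‖P.eval (v i)‖ < ((48:ℝ)^n)⁻¹ := by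
    intro i hi
    have := hcon i (by simpa [hs] using hi)
    simpa [hv, hw, hm] using this
  have h1 : (1:ℝ) ≤ ∑ i ∈ s, ‖P.eval (v i)‖ * B := by
    calc (1:ℝ) = ‖(1:ℂ)‖ := by simp
      _ = ‖∑ i ∈ s, P.eval (v i) * (Lagrange.basis s v i).eval 0‖ := by rw [← hsum]
      _ ≤ ∑ i ∈ s, ‖P.eval (v i) * (Lagrange.basis s v i).eval 0‖ := by
          exact norm_sum_le _ _
      _ ≤ ∑ i ∈ s, ‖P.eval (v i)‖ * B := by
          apply Finset.sum_le_sum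
          intro i hi
          rw [norm_mul]
          exact mul_le_mul_of_nonneg_left (hbasis i hi) (norm_nonneg _)
  have h2 : ∑ i ∈ s, ‖P.eval (v i)‖ * B < (m:ℝ) * (((48:ℝ)^n)⁻¹ * B) := by
    have hne : s.Nonempty := ⟨1, by simp [hs]; omega⟩
    calc ∑ i ∈ s, ‖P.eval (v i)‖ * B
        < ∑ _i ∈ s, ((48:ℝ)^n)⁻¹ * B := by
          apply Finset.sum_lt_sum_of_nonempty hne
          intro i hi
          exact mul_lt_mul_of_pos_right (hlt i hi) hBpos
      _ = (m:ℝ) * (((48:ℝ)^n)⁻¹ * B) := by rw [Finset.sum_const, hcard]; simp [nsmul_eq_mul]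
  have h3 : (m:ℝ) * (((48:ℝ)^n)⁻¹ * B) ≤ 1 := by
    have := aux_num n hn
    have h48 : (0:ℝ) < (48:ℝ)^n := by positivity
    rw [show (m:ℝ) * (((48:ℝ)^n)⁻¹ * B) = ((m:ℝ) * B) / (48:ℝ)^n by ring]
    rw [div_le_one h48]
    calc (m:ℝ) * B = ((n:ℝ)+1) * ((2*((n:ℝ)+1))^n * 2^n / (Nat.factorial n)) := by
          rw [hB]; push_cast [hm]; ring_nf
      _ ≤ 48^n := this
  linarith

lemma aux_final (n : ℕ) (hn : 1 ≤ n) :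
    ((10:ℝ)^(6*n))⁻¹ ≤ (1/(((n:ℝ)+1)*2^(n+1))) * (((48:ℝ)^n)⁻¹)^2 := by
  have hA : (0:ℝ) < ((n:ℝ)+1)*2^(n+1) := by positivity
  have h : ((n:ℝ)+1)*2^(n+1)*((48:ℝ)^n)^2 ≤ 10^(6*n) := by
    have h1 : ((n:ℝ)+1) ≤ 2^n := by exact_mod_cast (Nat.lt_two_pow_self (n := n))
    have h2 : ((48:ℝ)^n)^2 = 2304^n := by
      rw [← pow_mul, mul_comm n 2, pow_mul]; norm_num
    have h3 : (2:ℝ) ≤ 2^n := by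
      calc (2:ℝ) = 2^1 := (pow_one 2).symm
        _ ≤ 2^n := pow_le_pow_right₀ one_le_two hn
    calc ((n:ℝ)+1)*2^(n+1)*((48:ℝ)^n)^2
        ≤ 2^n * 2^(n+1) * 2304^n := by
          rw [h2]
          apply mul_le_mul_of_nonneg_right _ (by positivity)
          exact mul_le_mul_of_nonneg_right h1 (by positivity)
      _ = 2 * ((2*2*2304 : ℝ))^n := by rw [pow_succ, mul_pow, mul_pow]; ring
      _ = 2 * (9216 : ℝ)^n := by norm_num
      _ ≤ 2^n * 9216^n := mul_le_mul_of_nonneg_right h3 (by positivity)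
      _ = 18432^n := by rw [← mul_pow]; norm_num
      _ ≤ (10^6)^n := pow_le_pow_left₀ (by norm_num) (by norm_num) n
      _ = 10^(6*n) := by rw [← pow_mul, mul_comm]
  have := inv_anti₀ (by positivity) h
  calc ((10:ℝ)^(6*n))⁻¹ ≤ (((n:ℝ)+1)*2^(n+1)*((48:ℝ)^n)^2)⁻¹ := this
    _ = (1/(((n:ℝ)+1)*2^(n+1))) * (((48:ℝ)^n)⁻¹)^2 := by
        rw [mul_inv, inv_pow, one_div]

/-- Let `ν = ∑_{n≥2} (1/(n 2ⁿ)) ∑_{k=1}^{n} δ_{(n+k)/(4πn)}` (a measure on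
`[0, ∞)`) and let `μ = ν + ν ∘ (x ↦ -x)⁻¹` be its symmetrization. Then for every `n ≥ 1` and
every complex polynomial `P` of degree at most `n` with `P(0) = 1`, one has
`∫ |P(y)|² dμ(y) ≥ 10^{-6n}`. -/
theorem discrete_measure_polynomial_lower_bound
    (ν : Measure ℝ)
    (hν : ν = Measure.sum (fun n : ℕ =>
        (ENNReal.ofReal (1 / (((n : ℝ) + 2) * 2 ^ (n + 2)))) •
          ∑ k ∈ Finset.Icc 1 (n + 2),
            Measure.dirac ((((n : ℝ) + 2) + (k : ℝ)) / (4 * π * ((n : ℝ) + 2)))))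
    (μ : Measure ℝ) (hμ : μ = ν + ν.map (fun x : ℝ => -x)) :
    ∀ n : ℕ, 1 ≤ n → ∀ P : Polynomial ℂ, P.natDegree ≤ n → P.eval 0 = 1 →
      ((10 : ℝ) ^ (6 * n))⁻¹ ≤ ∫ y, ‖P.eval (y : ℂ)‖ ^ 2 ∂μ := by
  intro n hn P hdegP hP0
  obtain ⟨n', rfl⟩ : ∃ k, n = k + 1 := ⟨n - 1, by omega⟩
  set f : ℝ → ℝ := fun y => ‖P.eval (y : ℂ)‖ ^ 2 with hf_def
  have hf : Continuous f := by
    apply Continuous.pow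
    exact continuous_norm.comp (P.continuous.comp Complex.continuous_ofReal)
  -- the atoms lie in [0,1]
  have hatom : ∀ q k : ℕ, 1 ≤ k → k ≤ q + 2 →
      ((((q:ℝ)+2) + (k:ℝ)) / (4*π*((q:ℝ)+2))) ∈ Set.Icc (-1:ℝ) 1 := by
    intro q k hk1 hk2
    have hq2 : (0:ℝ) < (q:ℝ)+2 := by positivity
    have hd : (0:ℝ) < 4*π*((q:ℝ)+2) := by
      have := Real.pi_pos; positivity
    constructor
    · have : (0:ℝ) ≤ (((q:ℝ)+2) + (k:ℝ)) / (4*π*((q:ℝ)+2)) := by positivity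
      linarith
    · rw [div_le_one hd]
      have hk : (k:ℝ) ≤ (q:ℝ)+2 := by exact_mod_cast hk2
      have hπ : (3:ℝ) ≤ π := by linarith [Real.pi_gt_three]
      nlinarith
  -- measure of the complement of [-1,1]
  have hT : MeasurableSet (Set.Icc (-1:ℝ) 1)ᶜ := measurableSet_Icc.compl
  have hν0 : ν (Set.Icc (-1:ℝ) 1)ᶜ = 0 := by
    rw [hν, Measure.sum_apply _ hT]
    rw [ENNReal.tsum_eq_zero]
    intro q
    rw [Measure.smul_apply, Measure.finset_sum_apply]
    have : ∀ k ∈ Finset.Icc 1 (q+2),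
        Measure.dirac ((((q:ℝ)+2) + (k:ℝ)) / (4*π*((q:ℝ)+2))) (Set.Icc (-1:ℝ) 1)ᶜ = 0 := by
      intro k hk
      simp only [Finset.mem_Icc] at hk
      rw [Measure.dirac_apply' _ hT]
      exact Set.indicator_of_notMem (by
        simp only [Set.mem_compl_iff, not_not]
        exact hatom q k hk.1 hk.2) _
    rw [Finset.sum_congr rfl this]
    simp
  have hmap0 : (ν.map (fun x : ℝ => -x)) (Set.Icc (-1:ℝ) 1)ᶜ = 0 := by
    rw [Measure.map_apply measurable_neg hT]
    have : (fun x : ℝ => -x) ⁻¹' (Set.Icc (-1:ℝ) 1)ᶜ = (Set.Icc (-1:ℝ) 1)ᶜ := by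
      ext y
      simp only [Set.mem_preimage, Set.mem_compl_iff, Set.mem_Icc]
      constructor
      · intro h hc; exact h ⟨by linarith [hc.2], by linarith [hc.1]⟩
      · intro h hc; exact h ⟨by linarith [hc.2], by linarith [hc.1]⟩
    rw [this]
    exact hν0
  have hμ0 : μ (Set.Icc (-1:ℝ) 1)ᶜ = 0 := by
    rw [hμ, Measure.add_apply, hν0, hmap0, add_zero]
  have hae : ∀ᵐ y ∂μ, y ∈ Set.Icc (-1:ℝ) 1 := by
    rw [MeasureTheory.ae_iff]
    exact hμ0
  -- μ is finite
  have hνfin : ν Set.univ < ⊤ := by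
    rw [hν, Measure.sum_apply _ MeasurableSet.univ]
    have hbound : ∀ q : ℕ,
        ((ENNReal.ofReal (1 / (((q : ℝ) + 2) * 2 ^ (q + 2)))) •
          ∑ k ∈ Finset.Icc 1 (q + 2),
            Measure.dirac ((((q : ℝ) + 2) + (k : ℝ)) / (4 * π * ((q : ℝ) + 2)))) Set.univ
          ≤ (2⁻¹ : ℝ≥0∞)^q := by
      intro q
      rw [Measure.smul_apply, Measure.finset_sum_apply]
      have hsum1 : (∑ k ∈ Finset.Icc 1 (q+2),
          (Measure.dirac ((((q : ℝ) + 2) + (k : ℝ)) / (4 * π * ((q : ℝ) + 2))) : Measure ℝ)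
            Set.univ) = ((q+2 : ℕ) : ℝ≥0∞) := by
        simp [measure_univ]
      rw [hsum1, smul_eq_mul]
      have h1 : ((q+2 : ℕ) : ℝ≥0∞) = ENNReal.ofReal ((q:ℝ)+2) := by
        rw [← ENNReal.ofReal_natCast]; congr 1; push_cast; ring
      rw [h1, ← ENNReal.ofReal_mul (by positivity)]
      have h2 : 1 / (((q : ℝ) + 2) * 2 ^ (q + 2)) * ((q:ℝ)+2) = (1/2)^(q+2) := by
        have : ((q:ℝ)+2) ≠ 0 := by positivity
        field_simp
        try ring
        rw [← mul_pow]; norm_num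
      rw [h2]
      have h3 : ENNReal.ofReal ((1/2 : ℝ)^(q+2)) = (2⁻¹ : ℝ≥0∞)^(q+2) := by
        rw [ENNReal.ofReal_pow (by norm_num)]
        congr 1
        rw [one_div, ENNReal.ofReal_inv_of_pos (by norm_num)]
        norm_num
      rw [h3, pow_add]
      calc (2⁻¹ : ℝ≥0∞)^q * 2⁻¹^2 ≤ 2⁻¹^q * 1 := by
            apply mul_le_mul_right
            exact pow_le_one' (ENNReal.inv_le_one.mpr one_le_two) 2
        _ = 2⁻¹^q := mul_one _
    refine lt_of_le_of_lt (ENNReal.tsum_le_tsum hbound) ?_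
    rw [ENNReal.tsum_geometric, ENNReal.one_sub_inv_two, inv_inv]
    exact ENNReal.ofNat_lt_top
  have hfinμ : IsFiniteMeasure μ := by
    constructor
    rw [hμ, Measure.add_apply]
    have : (ν.map (fun x : ℝ => -x)) Set.univ = ν Set.univ := by
      rw [Measure.map_apply measurable_neg MeasurableSet.univ, Set.preimage_univ]
    rw [this]
    exact ENNReal.add_lt_top.mpr ⟨hνfin, hνfin⟩
  -- integrability
  obtain ⟨C, hC⟩ := (isCompact_Icc (a := (-1:ℝ)) (b := 1)).exists_bound_of_continuousOn
    hf.continuousOn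
  have hint : Integrable f μ := by
    apply (integrable_const C).mono' hf.aestronglyMeasurable
    filter_upwards [hae] with y hy
    exact hC y hy
  -- the key node
  obtain ⟨i, hi, hkey⟩ := aux_key (n'+1) (by omega) P hdegP hP0
  simp only [Finset.mem_Icc] at hi
  set x : ℝ := (((n':ℝ)+2) + (i:ℝ)) / (4*π*((n':ℝ)+2)) with hx_def
  have hxeq : ((((n'+1+1:ℕ):ℝ)) + (i:ℝ)) / (4*π*((n'+1+1:ℕ):ℝ)) = x := by
    rw [hx_def]; push_cast; ring_nf
  rw [hxeq] at hkey
  set c : ℝ≥0∞ := ENNReal.ofReal (1 / (((n' : ℝ) + 2) * 2 ^ (n' + 2))) with hc_def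
  set μ₀ : Measure ℝ := c • Measure.dirac x with hμ₀
  -- μ₀ ≤ μ
  have hle : μ₀ ≤ μ := by
    have h1 : Measure.dirac x ≤ ∑ k ∈ Finset.Icc 1 (n' + 2),
        Measure.dirac ((((n' : ℝ) + 2) + (k : ℝ)) / (4 * π * ((n' : ℝ) + 2))) := by
      have hmem : i ∈ Finset.Icc 1 (n' + 2) := Finset.mem_Icc.mpr ⟨hi.1, by omega⟩
      rw [Measure.le_iff']
      intro A
      rw [Measure.finset_sum_apply]
      exact Finset.single_le_sum (f := fun k : ℕ => (Measure.dirac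
          ((((n' : ℝ) + 2) + (k : ℝ)) / (4 * π * ((n' : ℝ) + 2))) : Measure ℝ) A)
          (fun k _ => zero_le) hmem
    have h2 : μ₀ ≤ (ENNReal.ofReal (1 / (((n' : ℝ) + 2) * 2 ^ (n' + 2)))) •
        ∑ k ∈ Finset.Icc 1 (n' + 2),
          Measure.dirac ((((n' : ℝ) + 2) + (k : ℝ)) / (4 * π * ((n' : ℝ) + 2))) := by
      rw [hμ₀]
      rw [Measure.le_iff']
      intro A
      rw [Measure.smul_apply, Measure.smul_apply, smul_eq_mul, smul_eq_mul]
      exact mul_le_mul_right (Measure.le_iff'.mp h1 A) c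
    have h3 : ν ≤ μ := by
      rw [hμ, Measure.le_iff']
      intro A
      rw [Measure.add_apply]
      exact le_self_add
    calc μ₀ ≤ _ := h2
      _ ≤ ν := by rw [hν]; exact Measure.le_sum _ n'
      _ ≤ μ := h3
  -- integral over μ₀
  have hpos : (0:ℝ) < 1 / (((n' : ℝ) + 2) * 2 ^ (n' + 2)) := by positivity
  have hι : ∫ y, f y ∂μ₀ = (1 / (((n' : ℝ) + 2) * 2 ^ (n' + 2))) * f x := by
    rw [hμ₀, integral_smul_measure, integral_dirac' f x hf.stronglyMeasurable,
      hc_def, ENNReal.toReal_ofReal hpos.le, smul_eq_mul]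
  have hfx : (((48:ℝ)^(n'+1))⁻¹)^2 ≤ f x := by
    rw [hf_def]
    exact pow_le_pow_left₀ (by positivity) hkey 2
  have hnum := aux_final (n'+1) (by omega)
  have hcast : ((((n'+1:ℕ):ℝ))+1) = (n':ℝ)+2 := by push_cast; ring
  calc ((10:ℝ)^(6*(n'+1)))⁻¹
      ≤ (1/(((((n'+1:ℕ)):ℝ)+1) * 2^((n'+1)+1))) * (((48:ℝ)^(n'+1))⁻¹)^2 := hnum
    _ = (1 / (((n' : ℝ) + 2) * 2 ^ (n' + 2))) * (((48:ℝ)^(n'+1))⁻¹)^2 := by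
        rw [hcast]
    _ ≤ (1 / (((n' : ℝ) + 2) * 2 ^ (n' + 2))) * f x :=
        mul_le_mul_of_nonneg_left hfx hpos.le
    _ = ∫ y, f y ∂μ₀ := hι.symm
    _ ≤ ∫ y, f y ∂μ := integral_mono_measure hle
        (Filter.Eventually.of_forall (fun y => by rw [hf_def]; positivity)) hint
end
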